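/- arXiv:1811.07725 — 2 statements merged into one kernel-verified Lean document; each statement's English description precedes it below -/
import Mathlib

section
/- Let m be an even positive integer, let e_j be a positive divisor of m−1 with f_j = (m−1)/e_j, let γ_j ∈ F_{2^{e_j}}, and let Q_j(x) = Tr^{m−1}_1( Σ_{i=1}^{(f_j−1)/2} x^{2^{i e_j}+1} ). Then for all a, x, z ∈ F_{2^{m−1}}: Q_j(γ_j a (x+z)) + Q_j(γ_j a x) + Q_j(γ_j a z) = Tr^{m−1}_1( a γ_j² ( a x + Tr^{m−1}_{e_j}(a x) ) z ), where Tr^{m−1}_{e_j} is the relative trace from F_{2^{m−1}} to F_{2^{e_j}}. -/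
open Finset

noncomputable section

abbrev Fq (n : ℕ) := GaloisField 2 n

noncomputable instance (n : ℕ) : Fintype (Fq n) := Fintype.ofFinite _

/-- Absolute trace from `F_{2^n}` to `F_2`. -/
noncomputable def tr1 (n : ℕ) (x : Fq n) : ZMod 2 :=
  Algebra.trace (ZMod 2) (Fq n) x

/-- `(-1)^x` for `x : F_2`, as an integer. -/
def chi (x : ZMod 2) : ℤ := (-1 : ℤ) ^ x.val

/-- Walsh transform of a Boolean function on `F_{2^n} × F_2`. -/
noncomputable def walsh (n : ℕ) (f : Fq n × ZMod 2 → ZMod 2)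
    (lam : Fq n) (nu : ZMod 2) : ℤ :=
  ∑ x : Fq n × ZMod 2, chi (f x + tr1 n (lam * x.1) + nu * x.2)

/-- A Boolean function on `F_{2^{m-1}} × F_2` is bent if all its Walsh coefficients
are `± 2^(m/2)`. -/
def IsBent (m : ℕ) (f : Fq (m - 1) × ZMod 2 → ZMod 2) : Prop :=
  ∀ lam nu, walsh (m - 1) f lam nu = 2 ^ (m / 2) ∨ walsh (m - 1) f lam nu = -(2 ^ (m / 2))

/-- Cyclic bent function on `F_{2^{m-1}} × F_2`. -/
def IsCyclicBent (m : ℕ) (f : Fq (m - 1) × ZMod 2 → ZMod 2) : Prop :=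
  ∀ a b : Fq (m - 1), a ≠ b → ∀ ε : ZMod 2,
    IsBent m fun x => f (a * x.1, x.2) + f (b * x.1, x.2 + ε)

/-- The quadratic function `Q_j(x) = Tr^{m-1}_1 (Σ_{i=1}^{(f_j-1)/2} x^{2^{i e_j}+1})`,
where `f_j = (m-1)/e_j`. -/
noncomputable def Qfun (m e : ℕ) (x : Fq (m - 1)) : ZMod 2 :=
  tr1 (m - 1) (∑ i ∈ Finset.Icc 1 (((m - 1) / e - 1) / 2), x ^ (2 ^ (i * e) + 1))

/-- Relative trace `Tr^n_r(x) = Σ_{i=0}^{n/r - 1} x^{2^{r i}}` from `F_{2^n}` onto the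
subfield `F_{2^r}` (for `r ∣ n`), valued in `F_{2^n}`. -/
noncomputable def relTr (n r : ℕ) (x : Fq n) : Fq n :=
  ∑ i ∈ Finset.range (n / r), x ^ 2 ^ (r * i)

/-! The polar form of `Q(x) = Tr(∑_{i=1}^{s} x^{2^{ie}+1})`, where `f = (m-1)/e = 2s+1`, is
`∑_{i=1}^{s} Tr(u^{2^{ie}} v + u v^{2^{ie}})`. The absolute trace is Frobenius invariant and
`w^{2^{ef}} = w`, so `Tr(u v^{2^{ie}}) = Tr(u^{2^{(f-i)e}} v)`: the two halves fill up
`∑_{0<i<f} Tr(u^{2^{ie}} v) = Tr((u + Tr_e u) v)`. Finally `Tr_e` is `F_{2^e}`-linear. -/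
theorem FiniteField.trace_pow_card_pow {K L : Type*} [Field K] [Fintype K] [Field L] [Algebra K L]
    [Algebra.IsAlgebraic K L] (k : ℕ) (x : L) :
    Algebra.trace K L (x ^ Fintype.card K ^ k) = Algebra.trace K L x := by
  have := Algebra.trace_eq_of_algEquiv (frobeniusAlgEquivOfAlgebraic K L ^ k) x
  rwa [AlgEquiv.coe_pow, coe_frobeniusAlgEquivOfAlgebraic_iterate] at this

theorem tr1_add (n : ℕ) (x y : Fq n) : tr1 n (x + y) = tr1 n x + tr1 n y :=
  map_add _ x y

theorem tr1_sum {ι : Type*} (n : ℕ) (t : Finset ι) (g : ι → Fq n) :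
    tr1 n (∑ i ∈ t, g i) = ∑ i ∈ t, tr1 n (g i) :=
  map_sum _ g t

theorem tr1_pow_two_pow (n k : ℕ) (w : Fq n) : tr1 n (w ^ 2 ^ k) = tr1 n w := by
  simpa only [tr1, ZMod.card] using FiniteField.trace_pow_card_pow (K := ZMod 2) k w

theorem Fq.pow_two_pow_self (n : ℕ) (w : Fq n) : w ^ 2 ^ n = w := by
  rcases eq_or_ne n 0 with rfl | hn
  · exact pow_one w
  · rw [← GaloisField.card 2 n hn, Nat.card_eq_fintype_card, FiniteField.pow_card]

theorem tr1_mul_pow_two_pow {n k : ℕ} (hk : k ≤ n) (u v : Fq n) :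
    tr1 n (u * v ^ 2 ^ k) = tr1 n (u ^ 2 ^ (n - k) * v) := by
  rw [← tr1_pow_two_pow n k (u ^ 2 ^ (n - k) * v), mul_pow, ← pow_mul, ← pow_add,
    Nat.sub_add_cancel hk, Fq.pow_two_pow_self]

theorem CharTwo.add_pow_two_pow_add_one {R : Type*} [CommRing R] [CharP R 2] (k : ℕ) (u v : R) :
    (u + v) ^ (2 ^ k + 1) + u ^ (2 ^ k + 1) + v ^ (2 ^ k + 1) = u ^ 2 ^ k * v + u * v ^ 2 ^ k := by
  rw [pow_succ, pow_succ, pow_succ, add_pow_char_pow]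
  linear_combination (u ^ 2 ^ k * u + v ^ 2 ^ k * v) * CharTwo.two_eq_zero (R := R)

theorem Finset.sum_range_two_mul_add_one {M : Type*} [AddCommMonoid M] (s : ℕ) (g : ℕ → M) :
    ∑ i ∈ range (2 * s + 1), g i = g 0 + ∑ i ∈ Icc 1 s, (g i + g (2 * s + 1 - i)) := by
  rw [sum_range_succ', add_comm, two_mul, sum_range_add,
    ← sum_range_reflect (fun j => g (s + j + 1)), ← sum_add_distrib]
  congr 1
  refine sum_nbij' (· + 1) (· - 1) ?_ ?_ ?_ ?_ ?_ <;> intro i hi <;>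
    simp only [mem_range, mem_Icc] at hi ⊢
  all_goals first | omega | rw [show s + (s - 1 - i) + 1 = s + s + 1 - (i + 1) by omega]

theorem pow_two_pow_mul_of_pow_two_pow_eq {n e : ℕ} {γ : Fq n} (hγ : γ ^ 2 ^ e = γ)
    (i : ℕ) :
    γ ^ 2 ^ (e * i) = γ := by
  have := Function.iterate_fixed (f := (· ^ 2 ^ e)) hγ i
  rwa [pow_iterate, ← pow_mul] at this

theorem relTr_mul_of_pow_two_pow_eq {n e : ℕ} {γ : Fq n} (hγ : γ ^ 2 ^ e = γ) (w : Fq n) :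
    relTr n e (γ * w) = γ * relTr n e w := by
  simp only [relTr, mul_sum, mul_pow, pow_two_pow_mul_of_pow_two_pow_eq hγ]

theorem Qfun_add_add (m e : ℕ) (u v : Fq (m - 1)) :
    Qfun m e (u + v) + Qfun m e u + Qfun m e v =
      ∑ i ∈ Icc 1 (((m - 1) / e - 1) / 2),
        tr1 (m - 1) (u ^ 2 ^ (i * e) * v + u * v ^ 2 ^ (i * e)) := by
  simp only [Qfun, ← tr1_add, ← sum_add_distrib, CharTwo.add_pow_two_pow_add_one, tr1_sum]

theorem tr1_add_relTr_mul {n e s : ℕ} (he : e ≠ 0) (hn : e * (2 * s + 1) = n) (u v : Fq n) :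
    tr1 n ((u + relTr n e u) * v) =
      ∑ i ∈ Icc 1 s, tr1 n (u ^ 2 ^ (i * e) * v + u * v ^ 2 ^ (i * e)) := by
  have hfe : n / e = 2 * s + 1 := by rw [← hn, Nat.mul_div_cancel_left _ (Nat.pos_of_ne_zero he)]
  rw [relTr, hfe, add_mul, sum_mul, tr1_add, tr1_sum,
    sum_range_two_mul_add_one (g := fun i => tr1 n (u ^ 2 ^ (e * i) * v)), ← add_assoc]
  simp only [mul_zero, pow_zero, pow_one, CharTwo.add_self_eq_zero, zero_add]
  refine sum_congr rfl fun i hi => ?_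
  have hie : i * e ≤ n := by rw [mem_Icc] at hi; rw [← hn]; nlinarith
  have hexp : n - i * e = e * (2 * s + 1 - i) := by rw [← hn, mul_comm i e, Nat.mul_sub]
  rw [tr1_add, tr1_mul_pow_two_pow hie, hexp, mul_comm i e]

theorem stmt3_general (m e : ℕ) (hm : Even m) (hm0 : 0 < m)
    (hdvd : e ∣ m - 1)
    (γ : Fq (m - 1)) (hγ : γ ^ (2 ^ e) = γ)  -- γ ∈ F_{2^e}
    (a x z : Fq (m - 1)) :
    Qfun m e (γ * a * (x + z)) + Qfun m e (γ * a * x) + Qfun m e (γ * a * z)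
      = tr1 (m - 1) (a * γ ^ 2 * (a * x + relTr (m - 1) e (a * x)) * z) := by
  have hodd : Odd (m - 1) := Nat.Even.sub_odd hm0 hm odd_one
  have he : e ≠ 0 := by
    rintro rfl
    rw [zero_dvd_iff] at hdvd
    exact Nat.not_odd_zero (hdvd ▸ hodd)
  have hef : e * ((m - 1) / e) = m - 1 := Nat.mul_div_cancel' hdvd
  obtain ⟨s, hs⟩ : Odd ((m - 1) / e) := (Nat.odd_mul.mp (hef ▸ hodd)).2
  rw [mul_add, Qfun_add_add, hs, show (2 * s + 1 - 1) / 2 = s by omega,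
    ← tr1_add_relTr_mul he (hs ▸ hef), mul_assoc γ a x, relTr_mul_of_pow_two_pow_eq hγ]
  congr 1
  ring

/-- the polarization identity for `Q_j`. -/
theorem stmt3 (m e : ℕ) (hm : Even m) (hm0 : 0 < m)
    (he : 0 < e) (hdvd : e ∣ m - 1)
    (γ : Fq (m - 1)) (hγ : γ ^ (2 ^ e) = γ)  -- γ ∈ F_{2^e}
    (a x z : Fq (m - 1)) :
    Qfun m e (γ * a * (x + z)) + Qfun m e (γ * a * x) + Qfun m e (γ * a * z)
      = tr1 (m - 1) (a * γ ^ 2 * (a * x + relTr (m - 1) e (a * x)) * z) :=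
  stmt3_general m e hm hm0 hdvd γ hγ a x z
end
end

section
/- Let m be an even positive integer, let g be a bent function on F_{2^{m−1}} × F_2 with g(0,0) = g(0,1) = 0, let u, μ₁, μ₂ ∈ F_2 and b ∈ F_{2^{m−1}} \ F_2, and set W = Σ_{(λ₁,λ₂) ∈ F_{2^{m−1}} × F_{2^{m−1}}} W_g(b λ₁ + λ₂, u) (−1)^{Tr^{m−1}_1(μ₁ λ₁ + μ₂ λ₂)}. Then W = 2^{2m−1} if μ₁ = μ₂ = u = 0, and W = 0 otherwise. -/
/-!
Writing `W_g(λ, u) = Σ_x (-1)^{g(x) + u x₂} ψ(λ x₁)` with `ψ = (-1)^{Tr(·)}` and exchanging sums,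
the sum over `(λ₁, λ₂)` splits into the two character sums `Σ_λ ψ(λ (b x₁ + μ₁))` and
`Σ_λ ψ(λ (x₁ + μ₂))`. Since `ψ` is primitive (the trace is onto `F_2`), they vanish unless
`x₁ = μ₂` and `b μ₂ = μ₁`, which for `b ∉ F_2` forces `μ₁ = μ₂ = 0`. What is left is
`2^{2(m-1)} Σ_{x₂} (-1)^{g(0, x₂) + u x₂} = 2^{2(m-1)} (1 + (-1)^u)`.
-/

open Finset

noncomputable section

noncomputable instance (n : ℕ) : DecidableEq (Fq n) := Classical.decEq _

lemma chi_add (a b : ZMod 2) : chi (a + b) = chi a * chi b := by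
  revert a b; decide

lemma chi_zero : chi 0 = 1 := rfl

lemma chi_one : chi 1 = -1 := rfl

lemma zmod_two_eq_zero_or_one (z : ZMod 2) : z = 0 ∨ z = 1 := by
  revert z; decide

lemma sum_zmod_two {M : Type*} [AddCommMonoid M] (F : ZMod 2 → M) : ∑ e, F e = F 0 + F 1 :=
  Fin.sum_univ_two F

def traceChar (n : ℕ) : AddChar (Fq n) ℤ where
  toFun x := chi (tr1 n x)
  map_zero_eq_one' := by simp [tr1, chi]
  map_add_eq_mul' x y := by simp only [tr1, map_add, chi_add]

lemma traceChar_apply (n : ℕ) (x : Fq n) : traceChar n x = chi (tr1 n x) := rfl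

lemma isPrimitive_traceChar (n : ℕ) : (traceChar n).IsPrimitive := by
  refine AddChar.IsPrimitive.of_ne_one (AddChar.ne_one_iff.2 ?_)
  obtain ⟨x, hx⟩ := Algebra.trace_surjective (ZMod 2) (Fq n) 1
  exact ⟨x, by rw [traceChar_apply, tr1, hx]; decide⟩

lemma sum_traceChar_mul (n : ℕ) (c : Fq n) :
    ∑ l : Fq n, traceChar n (l * c) = if c = 0 then (Fintype.card (Fq n) : ℤ) else 0 := by
  rw [AddChar.sum_mulShift c (isPrimitive_traceChar n), Nat.cast_ite, Nat.cast_zero]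

lemma walsh_eq_sum (n : ℕ) (f : Fq n × ZMod 2 → ZMod 2) (lam : Fq n) (nu : ZMod 2) :
    walsh n f lam nu = ∑ x : Fq n × ZMod 2, chi (f x + nu * x.2) * traceChar n (lam * x.1) := by
  refine Finset.sum_congr rfl fun x _ => ?_
  rw [add_right_comm, chi_add, traceChar_apply]

theorem sum_walsh_mul_chi_tr1 (n : ℕ) (f : Fq n × ZMod 2 → ZMod 2) (u : ZMod 2)
    (b c₁ c₂ : Fq n) :
    ∑ p : Fq n × Fq n, walsh n f (b * p.1 + p.2) u * chi (tr1 n (c₁ * p.1 + c₂ * p.2))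
      = if b * c₂ = c₁ then
          (Fintype.card (Fq n) : ℤ) ^ 2 * ∑ e : ZMod 2, chi (f (c₂, e) + u * e) else 0 := by
  set q := (Fintype.card (Fq n) : ℤ)
  calc ∑ p : Fq n × Fq n, walsh n f (b * p.1 + p.2) u * chi (tr1 n (c₁ * p.1 + c₂ * p.2))
      = ∑ x : Fq n × ZMod 2, chi (f x + u * x.2) *
          ((∑ l, traceChar n (l * (b * x.1 + c₁))) * ∑ l, traceChar n (l * (x.1 + c₂))) := by
        simp_rw [walsh_eq_sum, ← traceChar_apply, Finset.sum_mul]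
        rw [Finset.sum_comm]
        refine Fintype.sum_congr _ _ fun x => ?_
        simp_rw [Finset.mul_sum, Fintype.sum_prod_type]
        refine Fintype.sum_congr _ _ fun l₁ => Fintype.sum_congr _ _ fun l₂ => ?_
        rw [mul_assoc, ← AddChar.map_add_eq_mul, ← AddChar.map_add_eq_mul]
        ring_nf
    _ = ∑ x₁, ∑ e, chi (f (x₁, e) + u * e) *
          ((if b * x₁ = c₁ then q else 0) * if x₁ = c₂ then q else 0) := by
        simp_rw [sum_traceChar_mul, add_eq_zero_iff_eq_neg, CharTwo.neg_eq]
        exact Fintype.sum_prod_type _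
    _ = _ := by
        simp_rw [mul_ite, mul_zero, Finset.sum_ite_irrel, Finset.sum_const_zero,
          Fintype.sum_ite_eq', ← Finset.sum_mul]
        split_ifs <;> ring

lemma mul_algebraMap_eq_algebraMap_iff {K : Type*} [Semiring K] [Nontrivial K]
    [Algebra (ZMod 2) K] {b : K} (hb0 : b ≠ 0) (hb1 : b ≠ 1) (μ₁ μ₂ : ZMod 2) :
    b * algebraMap (ZMod 2) K μ₂ = algebraMap (ZMod 2) K μ₁ ↔ μ₁ = 0 ∧ μ₂ = 0 := by
  rcases zmod_two_eq_zero_or_one μ₁ with rfl | rfl <;>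
    rcases zmod_two_eq_zero_or_one μ₂ with rfl | rfl <;> simp [hb0, hb1]

theorem stmt13_general (m : ℕ) (hm : Even m) (hm0 : 0 < m)
    (g : Fq (m - 1) × ZMod 2 → ZMod 2)
    (h00 : g (0, 0) = 0) (h01 : g (0, 1) = 0)
    (u μ₁ μ₂ : ZMod 2) (b : Fq (m - 1)) (hb0 : b ≠ 0) (hb1 : b ≠ 1) :
    (∑ p : Fq (m - 1) × Fq (m - 1),
        walsh (m - 1) g (b * p.1 + p.2) u
          * chi (tr1 (m - 1) (algebraMap (ZMod 2) (Fq (m - 1)) μ₁ * p.1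
              + algebraMap (ZMod 2) (Fq (m - 1)) μ₂ * p.2)))
      = if μ₁ = 0 ∧ μ₂ = 0 ∧ u = 0 then 2 ^ (2 * m - 1) else 0 := by
  simp only [sum_walsh_mul_chi_tr1, mul_algebraMap_eq_algebraMap_iff hb0 hb1]
  by_cases hμ : μ₁ = 0 ∧ μ₂ = 0
  · obtain ⟨rfl, rfl⟩ := hμ
    have hcard : Fintype.card (Fq (m - 1)) = 2 ^ (m - 1) := by
      rw [Fintype.card_eq_nat_card]
      exact GaloisField.card 2 (m - 1) (by obtain ⟨k, rfl⟩ := hm; omega)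
    rw [if_pos ⟨rfl, rfl⟩, map_zero, sum_zmod_two, h00, h01, hcard]
    rcases zmod_two_eq_zero_or_one u with rfl | rfl
    · rw [if_pos ⟨rfl, rfl, rfl⟩, show 2 * m - 1 = 2 * (m - 1) + 1 by omega]
      simp only [mul_zero, zero_mul, add_zero, chi_zero]
      push_cast
      ring
    · rw [if_neg fun h => one_ne_zero h.2.2]
      simp only [mul_zero, mul_one, zero_add, chi_zero, chi_one]
      ring
  · rw [if_neg hμ, if_neg fun h => hμ ⟨h.1, h.2.1⟩]

/-- evaluation of the twisted Walsh sum
`W = Σ_{(λ₁,λ₂)} W_g(b λ₁ + λ₂, u) (-1)^{Tr(μ₁ λ₁ + μ₂ λ₂)}` for a bent function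
`g` with `g(0,0) = g(0,1) = 0`, `b ∉ F_2` and `u, μ₁, μ₂ ∈ F_2`. -/
theorem stmt13 (m : ℕ) (hm : Even m) (hm0 : 0 < m)
    (g : Fq (m - 1) × ZMod 2 → ZMod 2) (hg : IsBent m g)
    (h00 : g (0, 0) = 0) (h01 : g (0, 1) = 0)
    (u μ₁ μ₂ : ZMod 2) (b : Fq (m - 1)) (hb0 : b ≠ 0) (hb1 : b ≠ 1) :
    (∑ p : Fq (m - 1) × Fq (m - 1),
        walsh (m - 1) g (b * p.1 + p.2) u
          * chi (tr1 (m - 1) (algebraMap (ZMod 2) (Fq (m - 1)) μ₁ * p.1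
              + algebraMap (ZMod 2) (Fq (m - 1)) μ₂ * p.2)))
      = if μ₁ = 0 ∧ μ₂ = 0 ∧ u = 0 then 2 ^ (2 * m - 1) else 0 :=
  stmt13_general m hm hm0 g h00 h01 u μ₁ μ₂ b hb0 hb1
end
end
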